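/- For all real x ≥ 1/2 and real y, one has |Γ(x)/Γ(x + iy)| ≤ e^(π|y|/2). -/

import Mathlib

/-!
Euler's limit `Γ(s) = lim n^s n! / ∏_{j ≤ n} (s + j)` gives
`‖Γ(x) / Γ(x + iy)‖ = lim ∏_{j ≤ n} √((x + j)² + y²) / (x + j)`, and each factor decreases in `x`,
so the ratio is largest at `x = 1/2`. There the reflection formula together with
`Γ(1/2 - iy) = conj Γ(1/2 + iy)` gives `‖Γ(1/2 + iy)‖² = π / cosh(πy)`, hence the squared ratio is
`cosh(πy) ≤ exp(π|y|)`.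
-/

open Complex Filter Set Topology
open scoped Real ComplexConjugate

lemma norm_GammaSeq_div_GammaSeq_add_mul_I {x : ℝ} (hx : 0 < x) (y : ℝ) {n : ℕ} (hn : n ≠ 0) :
    ‖GammaSeq x n / GammaSeq (x + y * I) n‖ =
      ∏ j ∈ Finset.range (n + 1), √((x + j) ^ 2 + y ^ 2) / (x + j) := by
  have hre : ∀ j : ℕ, ‖(x : ℂ) + j‖ = x + j := fun j => by
    rw [← ofReal_natCast, ← ofReal_add, norm_real, Real.norm_of_nonneg (by positivity)]
  have him : ∀ j : ℕ, ‖(x : ℂ) + y * I + j‖ = √((x + j) ^ 2 + y ^ 2) := fun j => by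
    rw [show (x : ℂ) + y * I + j = ((x + j : ℝ) : ℂ) + y * I by push_cast; ring, norm_add_mul_I]
  have hs : ((x : ℂ) + y * I).re = x := by simp
  simp only [GammaSeq, norm_div, norm_mul, norm_prod, norm_natCast_cpow_of_pos (Nat.pos_of_ne_zero hn),
    norm_natCast, hre, him, ofReal_re, hs]
  rw [Finset.prod_div_distrib]
  have : ∏ j ∈ Finset.range (n + 1), (x + (j : ℝ)) ≠ 0 := by positivity
  have : (n.factorial : ℝ) ≠ 0 := by positivity
  field_simp

lemma tendsto_norm_GammaSeq_div_GammaSeq_add_mul_I {x : ℝ} (hx : 0 < x) (y : ℝ) :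
    Tendsto (fun n => ‖GammaSeq x n / GammaSeq (x + y * I) n‖) atTop
      (𝓝 ‖Gamma x / Gamma (x + y * I)‖) :=
  ((GammaSeq_tendsto_Gamma _).div (GammaSeq_tendsto_Gamma _)
    (Gamma_ne_zero_of_re_pos (by simpa using hx))).norm

lemma antitoneOn_sqrt_sq_add_sq_div (y : ℝ) :
    AntitoneOn (fun a : ℝ => √(a ^ 2 + y ^ 2) / a) (Ioi 0) := by
  intro b (hb : 0 < b) a (ha : 0 < a) hba
  dsimp only
  rw [div_le_div_iff₀ ha hb, ← pow_le_pow_iff_left₀ (by positivity) (by positivity) two_ne_zero,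
    mul_pow, mul_pow, Real.sq_sqrt (by positivity), Real.sq_sqrt (by positivity)]
  nlinarith [mul_self_le_mul_self hb.le hba]

lemma antitoneOn_norm_Gamma_div_Gamma_add_mul_I (y : ℝ) :
    AntitoneOn (fun x : ℝ => ‖Gamma x / Gamma (x + y * I)‖) (Ioi 0) := by
  intro b (hb : 0 < b) a (ha : 0 < a) hba
  refine le_of_tendsto_of_tendsto (tendsto_norm_GammaSeq_div_GammaSeq_add_mul_I ha y)
    (tendsto_norm_GammaSeq_div_GammaSeq_add_mul_I hb y) ?_
  filter_upwards [eventually_ne_atTop 0] with n hn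
  rw [norm_GammaSeq_div_GammaSeq_add_mul_I ha y hn, norm_GammaSeq_div_GammaSeq_add_mul_I hb y hn]
  refine Finset.prod_le_prod (fun j _ => by positivity) fun j _ =>
    antitoneOn_sqrt_sq_add_sq_div y (by positivity : 0 < b + j) (by positivity : 0 < a + j)
      (by linarith)

lemma sq_norm_Gamma_one_half_add_mul_I (y : ℝ) :
    ‖Gamma (1 / 2 + y * I)‖ ^ 2 = π / Real.cosh (π * y) := by
  set z : ℂ := 1 / 2 + y * I
  have hconj : conj z = 1 - z := by
    simp only [z, map_add, map_mul, map_div₀, map_one, map_ofNat, conj_ofReal, conj_I]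
    ring
  have hsin : sin (π * z) = cosh (π * y) := by
    rw [show (π : ℂ) * z = π * y * I + π / 2 by simp only [z]; ring, sin_add_pi_div_two, cos_mul_I]
  have hz : ((‖Gamma z‖ ^ 2 : ℝ) : ℂ) = ((π / Real.cosh (π * y) : ℝ) : ℂ) := by
    push_cast
    rw [← mul_conj', ← Gamma_conj, hconj, Gamma_mul_Gamma_one_sub, hsin]
  exact_mod_cast hz

lemma sq_norm_Gamma_one_half_div_Gamma_one_half_add_mul_I (y : ℝ) :
    ‖Gamma (1 / 2) / Gamma (1 / 2 + y * I)‖ ^ 2 = Real.cosh (π * y) := by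
  have h0 := sq_norm_Gamma_one_half_add_mul_I 0
  simp only [ofReal_zero, zero_mul, add_zero, mul_zero, Real.cosh_zero, div_one] at h0
  rw [norm_div, div_pow, h0, sq_norm_Gamma_one_half_add_mul_I, div_div_cancel₀ Real.pi_ne_zero]

lemma Real.cosh_le_exp_abs (t : ℝ) : Real.cosh t ≤ Real.exp |t| := by
  rw [← Real.cosh_abs, Real.cosh_eq]
  linarith [Real.exp_le_exp.2 (neg_le_self (abs_nonneg t))]

theorem gamma_ratio_bound (x y : ℝ) (hx : 1/2 ≤ x) :
    ‖Complex.Gamma (x : ℂ) / Complex.Gamma ((x : ℂ) + (y : ℂ) * Complex.I)‖ ≤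
      Real.exp (Real.pi * |y| / 2) := by
  have hmono := antitoneOn_norm_Gamma_div_Gamma_add_mul_I y (by norm_num : (1 / 2 : ℝ) ∈ Ioi 0)
    (by linarith : (0 : ℝ) < x) hx
  refine hmono.trans ?_
  rw [← pow_le_pow_iff_left₀ (norm_nonneg _) (Real.exp_pos _).le two_ne_zero, ← Real.exp_nat_mul]
  push_cast
  rw [sq_norm_Gamma_one_half_div_Gamma_one_half_add_mul_I, mul_div_cancel₀ _ two_ne_zero,
    ← abs_of_pos Real.pi_pos, ← abs_mul, abs_of_pos Real.pi_pos]
  exact Real.cosh_le_exp_abs _
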